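/- Let S ⊆ ℝ² be an open set and let u : ℝ² → ℝ³ be smooth on S with ∂₁u(x) and ∂₂u(x) linearly independent at every x ∈ S. Define g_{ij} = ∂ᵢu·∂ⱼu with inverse (g^{ij}), n = (∂₁u × ∂₂u)/|∂₁u × ∂₂u|, h_{ij} = n·∂ᵢ∂ⱼu and Γ^k_{ij} = ½ g^{kl}(∂ⱼg_{il} + ∂ᵢg_{jl} − ∂_l g_{ij}). Let τ : S → ℝ³ be smooth with ∂ᵢu·∂ⱼτ + ∂ⱼu·∂ᵢτ = 0 on S for all i, j, and set b_{ij} = n·(∂ᵢ∂ⱼτ − Γ^k_{ij}∂_k τ) (so b_{12} = b_{21}). Then on S: b_{11}h_{22} + h_{11}b_{22} − 2h_{12}b_{12} = 0, ∂₂b_{11} − ∂₁b_{12} − Γ^k_{12}b_{k1} + Γ^k_{11}b_{k2} = 0, and ∂₂b_{12} − ∂₁b_{22} − Γ^k_{22}b_{k1} + Γ^k_{12}b_{k2} = 0. -/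

import Mathlib

open Matrix Set

noncomputable section

/-- The `i`-th partial derivative of a map `ℝ² → ℝ³`. -/
def pdv (i : Fin 2) (f : (Fin 2 → ℝ) → (Fin 3 → ℝ)) (x : Fin 2 → ℝ) : Fin 3 → ℝ :=
  fderiv ℝ f x (Pi.single i 1)

/-- The `i`-th partial derivative of a scalar function on `ℝ²`. -/
def pds (i : Fin 2) (f : (Fin 2 → ℝ) → ℝ) (x : Fin 2 → ℝ) : ℝ :=
  fderiv ℝ f x (Pi.single i 1)

/-- Euclidean norm on `ℝ³`. -/
def norm3 (a : Fin 3 → ℝ) : ℝ := Real.sqrt (a ⬝ᵥ a)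

/-- The induced metric `g_{ij} = ∂ᵢu·∂ⱼu` of `u`. -/
def gmat (u : (Fin 2 → ℝ) → (Fin 3 → ℝ)) (x : Fin 2 → ℝ) : Matrix (Fin 2) (Fin 2) ℝ :=
  Matrix.of fun i j => pdv i u x ⬝ᵥ pdv j u x

/-- The inverse metric `(g^{ij})`. -/
def ginv (u : (Fin 2 → ℝ) → (Fin 3 → ℝ)) (x : Fin 2 → ℝ) : Matrix (Fin 2) (Fin 2) ℝ :=
  (gmat u x)⁻¹

/-- The unit normal `n = (∂₁u × ∂₂u)/|∂₁u × ∂₂u|` of `u`. -/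
def nrm (u : (Fin 2 → ℝ) → (Fin 3 → ℝ)) (x : Fin 2 → ℝ) : Fin 3 → ℝ :=
  (norm3 (pdv 0 u x ⨯₃ pdv 1 u x))⁻¹ • (pdv 0 u x ⨯₃ pdv 1 u x)

/-- The second fundamental form `h_{ij} = n·∂ᵢ∂ⱼu` of `u`. -/
def sff (u : (Fin 2 → ℝ) → (Fin 3 → ℝ)) (x : Fin 2 → ℝ) (i j : Fin 2) : ℝ :=
  nrm u x ⬝ᵥ pdv i (pdv j u) x

/-- The Christoffel symbols `Γ^k_{ij} = ½ g^{kl}(∂ⱼg_{il} + ∂ᵢg_{jl} − ∂_l g_{ij})` of `u`. -/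
def Gam (u : (Fin 2 → ℝ) → (Fin 3 → ℝ)) (x : Fin 2 → ℝ) (k i j : Fin 2) : ℝ :=
  (1/2) * ∑ l, ginv u x k l *
    (pds j (fun y => gmat u y i l) x + pds i (fun y => gmat u y j l) x
      - pds l (fun y => gmat u y i j) x)
section Toolkit

variable {S : Set (Fin 2 → ℝ)} {x : Fin 2 → ℝ}

lemma pds_congr {f g : (Fin 2 → ℝ) → ℝ} {i : Fin 2} (h : f =ᶠ[nhds x] g) :
    pds i f x = pds i g x := by unfold pds; rw [h.fderiv_eq]

lemma pdv_congr {f g : (Fin 2 → ℝ) → (Fin 3 → ℝ)} {i : Fin 2} (h : f =ᶠ[nhds x] g) :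
    pdv i f x = pdv i g x := by unfold pdv; rw [h.fderiv_eq]

lemma evEq_of_eqOn (hS : IsOpen S) (hx : x ∈ S) {α : Type*} {f g : (Fin 2 → ℝ) → α}
    (h : ∀ z ∈ S, f z = g z) : f =ᶠ[nhds x] g :=
  Filter.eventuallyEq_of_mem (hS.mem_nhds hx) h

lemma diffAt (hS : IsOpen S) (hx : x ∈ S) {F : Type*} [NormedAddCommGroup F]
    [NormedSpace ℝ F] {f : (Fin 2 → ℝ) → F} (hf : ContDiffOn ℝ (⊤ : ℕ∞) f S) :
    DifferentiableAt ℝ f x :=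
  ((hf x hx).contDiffAt (hS.mem_nhds hx)).differentiableAt (by simp)

lemma cdo_pdv (hS : IsOpen S) {f : (Fin 2 → ℝ) → (Fin 3 → ℝ)}
    (hf : ContDiffOn ℝ (⊤ : ℕ∞) f S) (i : Fin 2) : ContDiffOn ℝ (⊤ : ℕ∞) (pdv i f) S :=
  (hf.fderiv_of_isOpen hS (by simp)).clm_apply contDiffOn_const

lemma cdo_comp {f : (Fin 2 → ℝ) → (Fin 3 → ℝ)} (hf : ContDiffOn ℝ (⊤ : ℕ∞) f S) (k : Fin 3) :
    ContDiffOn ℝ (⊤ : ℕ∞) (fun z => f z k) S :=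
  (ContinuousLinearMap.contDiff
    (ContinuousLinearMap.proj (R := ℝ) (φ := fun _ : Fin 3 => ℝ) k)).comp_contDiffOn hf

lemma cdo_dot {f g : (Fin 2 → ℝ) → (Fin 3 → ℝ)} (hf : ContDiffOn ℝ (⊤ : ℕ∞) f S)
    (hg : ContDiffOn ℝ (⊤ : ℕ∞) g S) : ContDiffOn ℝ (⊤ : ℕ∞) (fun z => f z ⬝ᵥ g z) S := by
  simp only [dotProduct]
  exact ContDiffOn.sum fun k _ => (cdo_comp hf k).mul (cdo_comp hg k)

lemma cdo_cross {f g : (Fin 2 → ℝ) → (Fin 3 → ℝ)} (hf : ContDiffOn ℝ (⊤ : ℕ∞) f S)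
    (hg : ContDiffOn ℝ (⊤ : ℕ∞) g S) : ContDiffOn ℝ (⊤ : ℕ∞) (fun z => f z ⨯₃ g z) S := by
  rw [contDiffOn_pi]
  intro k
  fin_cases k <;> simp only [cross_apply, Matrix.cons_val_zero, Matrix.cons_val_one,
    Matrix.head_cons, Matrix.cons_val_two, Matrix.tail_cons, Fin.isValue] <;>
    exact ((cdo_comp hf _).mul (cdo_comp hg _)).sub ((cdo_comp hf _).mul (cdo_comp hg _))

lemma cdo_smul {c : (Fin 2 → ℝ) → ℝ} {g : (Fin 2 → ℝ) → (Fin 3 → ℝ)}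
    (hc : ContDiffOn ℝ (⊤ : ℕ∞) c S) (hg : ContDiffOn ℝ (⊤ : ℕ∞) g S) :
    ContDiffOn ℝ (⊤ : ℕ∞) (fun z => c z • g z) S := by
  rw [contDiffOn_pi]
  intro k
  exact (hc.mul (cdo_comp hg k)).congr (fun z _ => rfl)

end Toolkit
section Rules

variable {S : Set (Fin 2 → ℝ)} {x : Fin 2 → ℝ} {i : Fin 2}

lemma diffAt_comp {f : (Fin 2 → ℝ) → (Fin 3 → ℝ)} (hf : DifferentiableAt ℝ f x) (k : Fin 3) :
    DifferentiableAt ℝ (fun z => f z k) x :=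
  ((ContinuousLinearMap.proj (R := ℝ) (φ := fun _ : Fin 3 => ℝ) k).differentiableAt).comp x hf

lemma pdv_apply {f : (Fin 2 → ℝ) → (Fin 3 → ℝ)} (hf : DifferentiableAt ℝ f x) (k : Fin 3) :
    pdv i f x k = pds i (fun z => f z k) x := by
  unfold pdv pds
  have h : (fun z => f z k) =
      (ContinuousLinearMap.proj (R := ℝ) (φ := fun _ : Fin 3 => ℝ) k) ∘ f := rfl
  rw [h, fderiv_comp x (ContinuousLinearMap.differentiableAt _) hf]
  simp [ContinuousLinearMap.fderiv]

lemma pds_const (c : ℝ) : pds i (fun _ => c) x = 0 := by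
  unfold pds; simp

lemma pds_sub {f g : (Fin 2 → ℝ) → ℝ} (hf : DifferentiableAt ℝ f x)
    (hg : DifferentiableAt ℝ g x) :
    pds i (fun z => f z - g z) x = pds i f x - pds i g x := by
  unfold pds; rw [fderiv_fun_sub hf hg]; simp

lemma pds_mul {f g : (Fin 2 → ℝ) → ℝ} (hf : DifferentiableAt ℝ f x)
    (hg : DifferentiableAt ℝ g x) :
    pds i (fun z => f z * g z) x = pds i f x * g x + f x * pds i g x := by
  unfold pds; rw [fderiv_fun_mul hf hg]; simp; ring

lemma pds_sum {n : ℕ} {f : Fin n → (Fin 2 → ℝ) → ℝ} (hf : ∀ k, DifferentiableAt ℝ (f k) x) :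
    pds i (fun z => ∑ k, f k z) x = ∑ k, pds i (f k) x := by
  unfold pds
  rw [fderiv_fun_sum (fun k _ => hf k)]
  simp

lemma pds_dot {f g : (Fin 2 → ℝ) → (Fin 3 → ℝ)} (hf : DifferentiableAt ℝ f x)
    (hg : DifferentiableAt ℝ g x) :
    pds i (fun z => f z ⬝ᵥ g z) x = pdv i f x ⬝ᵥ g x + f x ⬝ᵥ pdv i g x := by
  simp only [dotProduct]
  rw [pds_sum (f := fun k z => f z k * g z k) (fun k => (diffAt_comp hf k).mul (diffAt_comp hg k))]
  have : ∀ k : Fin 3, pds i (fun z => f z k * g z k) x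
      = pds i (fun z => f z k) x * g x k + f x k * pds i (fun z => g z k) x :=
    fun k => pds_mul (diffAt_comp hf k) (diffAt_comp hg k)
  simp_rw [this, pdv_apply hf, pdv_apply hg]
  rw [Finset.sum_add_distrib]

lemma pdv_add {f g : (Fin 2 → ℝ) → (Fin 3 → ℝ)} (hf : DifferentiableAt ℝ f x)
    (hg : DifferentiableAt ℝ g x) :
    pdv i (fun z => f z + g z) x = pdv i f x + pdv i g x := by
  unfold pdv; rw [fderiv_fun_add hf hg]; simp

lemma diffAt_cross {f g : (Fin 2 → ℝ) → (Fin 3 → ℝ)} (hf : DifferentiableAt ℝ f x)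
    (hg : DifferentiableAt ℝ g x) :
    DifferentiableAt ℝ (fun z => f z ⨯₃ g z) x := by
  rw [differentiableAt_pi]
  intro k
  fin_cases k <;> simp only [cross_apply, Matrix.cons_val_zero, Matrix.cons_val_one,
    Matrix.head_cons, Matrix.cons_val_two, Matrix.tail_cons, Fin.isValue] <;>
    exact ((diffAt_comp hf _).mul (diffAt_comp hg _)).sub ((diffAt_comp hf _).mul (diffAt_comp hg _))

lemma diffAt_smul {c : (Fin 2 → ℝ) → ℝ} {g : (Fin 2 → ℝ) → (Fin 3 → ℝ)}
    (hc : DifferentiableAt ℝ c x) (hg : DifferentiableAt ℝ g x) :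
    DifferentiableAt ℝ (fun z => c z • g z) x := by
  rw [differentiableAt_pi]
  intro k
  exact (hc.mul (diffAt_comp hg k))

lemma pdv_cross {f g : (Fin 2 → ℝ) → (Fin 3 → ℝ)} (hf : DifferentiableAt ℝ f x)
    (hg : DifferentiableAt ℝ g x) :
    pdv i (fun z => f z ⨯₃ g z) x = pdv i f x ⨯₃ g x + f x ⨯₃ pdv i g x := by
  funext k
  rw [pdv_apply (diffAt_cross hf hg) k]
  fin_cases k <;>
  · simp only [cross_apply, Fin.zero_eta, Fin.mk_one, show (⟨2,by norm_num⟩ : Fin 3) = 2 from rfl, Matrix.cons_val_zero,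
      Matrix.cons_val_one, Matrix.head_cons, Matrix.cons_val_two, Matrix.tail_cons,
      Fin.isValue, Pi.add_apply]
    rw [pds_sub ((diffAt_comp hf _).fun_mul (diffAt_comp hg _))
        ((diffAt_comp hf _).fun_mul (diffAt_comp hg _)),
      pds_mul (diffAt_comp hf _) (diffAt_comp hg _),
      pds_mul (diffAt_comp hf _) (diffAt_comp hg _)]
    rw [pdv_apply hf, pdv_apply hf, pdv_apply hg, pdv_apply hg]
    ring

lemma pdv_smul {c : (Fin 2 → ℝ) → ℝ} {g : (Fin 2 → ℝ) → (Fin 3 → ℝ)}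
    (hc : DifferentiableAt ℝ c x) (hg : DifferentiableAt ℝ g x) :
    pdv i (fun z => c z • g z) x = pds i c x • g x + c x • pdv i g x := by
  funext k
  rw [pdv_apply (diffAt_smul hc hg) k]
  have h : (fun z => (c z • g z) k) = fun z => c z * g z k := rfl
  rw [h, pds_mul hc (diffAt_comp hg k)]
  simp [pdv_apply hg]

end Rules
section Schwarz

variable {S : Set (Fin 2 → ℝ)} {x : Fin 2 → ℝ}

lemma pd_comm_gen {F : Type*} [NormedAddCommGroup F] [NormedSpace ℝ F]
    (hS : IsOpen S) (hx : x ∈ S) {f : (Fin 2 → ℝ) → F} (hf : ContDiffOn ℝ (⊤ : ℕ∞) f S)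
    (i j : Fin 2) :
    fderiv ℝ (fun z => fderiv ℝ f z (Pi.single j 1)) x (Pi.single i 1)
      = fderiv ℝ (fun z => fderiv ℝ f z (Pi.single i 1)) x (Pi.single j 1) := by
  have hfa : ContDiffAt ℝ (⊤ : ℕ∞) f x := (hf x hx).contDiffAt (hS.mem_nhds hx)
  have h1 : DifferentiableAt ℝ (fderiv ℝ f) x :=
    (hfa.fderiv_right (m := (⊤ : ℕ∞)) (by simp)).differentiableAt (by simp)
  have e : ∀ v w : Fin 2 → ℝ,
      fderiv ℝ (fun z => fderiv ℝ f z w) x v = fderiv ℝ (fderiv ℝ f) x v w := by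
    intro v w
    rw [fderiv_clm_apply h1 (differentiableAt_const w)]
    simp
  rw [e, e]
  exact (hfa.isSymmSndFDerivAt (by rw [minSmoothness_of_isRCLikeNormedField]; exact WithTop.coe_le_coe.mpr le_top)) _ _

lemma pdv_comm (hS : IsOpen S) (hx : x ∈ S) {f : (Fin 2 → ℝ) → (Fin 3 → ℝ)}
    (hf : ContDiffOn ℝ (⊤ : ℕ∞) f S) (i j : Fin 2) :
    pdv i (pdv j f) x = pdv j (pdv i f) x :=
  pd_comm_gen hS hx hf i j

end Schwarz
section LinAlg

/-- If three vectors are all orthogonal to a nonzero vector `w`, the triple product vanishes. -/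
lemma triple_perp {w p q r : Fin 3 → ℝ} (hw : w ≠ 0) (hp : p ⬝ᵥ w = 0)
    (hq : q ⬝ᵥ w = 0) (hr : r ⬝ᵥ w = 0) : p ⬝ᵥ (q ⨯₃ r) = 0 := by
  have hM : (![p, q, r] : Matrix (Fin 3) (Fin 3) ℝ) *ᵥ w = 0 := by
    funext j
    fin_cases j <;>
      simp_all [Matrix.mulVec, dotProduct]
  have hdet : Matrix.det ![p, q, r] = 0 := by
    exact Matrix.exists_mulVec_eq_zero_iff.mp ⟨w, hw, hM⟩
  rw [triple_product_eq_det]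
  exact hdet

lemma det_triple (a b : Fin 3 → ℝ) :
    Matrix.det ![a, b, a ⨯₃ b] = (a ⨯₃ b) ⬝ᵥ (a ⨯₃ b) := by
  rw [← triple_product_eq_det]
  simp only [cross_apply, dotProduct, Fin.sum_univ_three, Matrix.cons_val_zero,
    Matrix.cons_val_one, Matrix.head_cons, Matrix.cons_val_two, Matrix.tail_cons]
  ring

/-- A vector orthogonal to `a`, `b` and `a ⨯₃ b` (the latter nonzero) is zero. -/
lemma frame_zero {a b v : Fin 3 → ℝ} (hw : a ⨯₃ b ≠ 0)
    (ha : v ⬝ᵥ a = 0) (hb : v ⬝ᵥ b = 0) (hc : v ⬝ᵥ (a ⨯₃ b) = 0) : v = 0 := by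
  by_contra hv
  have hM : (![a, b, a ⨯₃ b] : Matrix (Fin 3) (Fin 3) ℝ) *ᵥ v = 0 := by
    funext j
    have ha' : a ⬝ᵥ v = 0 := by rwa [dotProduct_comm] at ha
    have hb' : b ⬝ᵥ v = 0 := by rwa [dotProduct_comm] at hb
    have hc' : (a ⨯₃ b) ⬝ᵥ v = 0 := by rwa [dotProduct_comm] at hc
    fin_cases j <;> simp_all [Matrix.mulVec, dotProduct]
  have hdet : Matrix.det ![a, b, a ⨯₃ b] = 0 := by
    exact Matrix.exists_mulVec_eq_zero_iff.mp ⟨v, hv, hM⟩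
  rw [det_triple] at hdet
  exact hw ((dotProduct_self_eq_zero).mp hdet)

lemma eq_of_dots {a b v₁ v₂ : Fin 3 → ℝ} (hw : a ⨯₃ b ≠ 0)
    (ha : v₁ ⬝ᵥ a = v₂ ⬝ᵥ a) (hb : v₁ ⬝ᵥ b = v₂ ⬝ᵥ b)
    (hc : v₁ ⬝ᵥ (a ⨯₃ b) = v₂ ⬝ᵥ (a ⨯₃ b)) : v₁ = v₂ := by
  have h := frame_zero (v := v₁ - v₂) hw (by rw [sub_dotProduct]; rw [ha]; ring)
    (by rw [sub_dotProduct]; rw [hb]; ring)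
    (by rw [sub_dotProduct]; rw [hc]; ring)
  have := sub_eq_zero.mp h
  exact this

end LinAlg
section Immersion

variable {S : Set (Fin 2 → ℝ)} {x : Fin 2 → ℝ} {u : (Fin 2 → ℝ) → (Fin 3 → ℝ)}

lemma dot_self_pos {w : Fin 3 → ℝ} (hw : w ≠ 0) : 0 < w ⬝ᵥ w := by
  have h0 : (0:ℝ) ≤ w ⬝ᵥ w := Finset.sum_nonneg fun i _ => mul_self_nonneg _
  rcases h0.lt_or_eq with h | h
  · exact h
  · exact absurd (dotProduct_self_eq_zero.mp h.symm) hw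

lemma w_ne (himm : ∀ x ∈ S, LinearIndependent ℝ ![pdv 0 u x, pdv 1 u x]) (hx : x ∈ S) :
    pdv 0 u x ⨯₃ pdv 1 u x ≠ 0 :=
  crossProduct_ne_zero_iff_linearIndependent.mpr (himm x hx)

lemma norm3_pos {w : Fin 3 → ℝ} (hw : w ≠ 0) : 0 < norm3 w :=
  Real.sqrt_pos.mpr (dot_self_pos hw)

lemma norm3_sq {w : Fin 3 → ℝ} : norm3 w * norm3 w = w ⬝ᵥ w :=
  Real.mul_self_sqrt (Finset.sum_nonneg fun i _ => mul_self_nonneg _)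

lemma cross_dot_left (a b : Fin 3 → ℝ) : (a ⨯₃ b) ⬝ᵥ a = 0 := by
  simp only [cross_apply, dotProduct, Fin.sum_univ_three, Matrix.cons_val_zero,
    Matrix.cons_val_one, Matrix.head_cons, Matrix.cons_val_two, Matrix.tail_cons]
  ring

lemma cross_dot_right (a b : Fin 3 → ℝ) : (a ⨯₃ b) ⬝ᵥ b = 0 := by
  simp only [cross_apply, dotProduct, Fin.sum_univ_three, Matrix.cons_val_zero,
    Matrix.cons_val_one, Matrix.head_cons, Matrix.cons_val_two, Matrix.tail_cons]
  ring

lemma nrm_def : nrm u x = (norm3 (pdv 0 u x ⨯₃ pdv 1 u x))⁻¹ • (pdv 0 u x ⨯₃ pdv 1 u x) := rfl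

lemma smul_dot (c : ℝ) (v w : Fin 3 → ℝ) : (c • v) ⬝ᵥ w = c * (v ⬝ᵥ w) := by
  simp [dotProduct, Finset.mul_sum, mul_assoc]

lemma dot_smul' (c : ℝ) (v w : Fin 3 → ℝ) : v ⬝ᵥ (c • w) = c * (v ⬝ᵥ w) := by
  simp only [dotProduct, Pi.smul_apply, smul_eq_mul, Finset.mul_sum]
  exact Finset.sum_congr rfl fun i _ => by ring

lemma nrm_dot_a : nrm u x ⬝ᵥ pdv 0 u x = 0 := by
  rw [nrm_def, smul_dot, cross_dot_left, mul_zero]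

lemma nrm_dot_b : nrm u x ⬝ᵥ pdv 1 u x = 0 := by
  rw [nrm_def, smul_dot, cross_dot_right, mul_zero]

lemma nrm_dot_w (himm : ∀ x ∈ S, LinearIndependent ℝ ![pdv 0 u x, pdv 1 u x]) (hx : x ∈ S) :
    nrm u x ⬝ᵥ (pdv 0 u x ⨯₃ pdv 1 u x) = norm3 (pdv 0 u x ⨯₃ pdv 1 u x) := by
  rw [nrm_def, smul_dot, ← norm3_sq]
  field_simp [(norm3_pos (w_ne himm hx)).ne']

lemma nrm_dot_nrm (himm : ∀ x ∈ S, LinearIndependent ℝ ![pdv 0 u x, pdv 1 u x]) (hx : x ∈ S) :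
    nrm u x ⬝ᵥ nrm u x = 1 := by
  rw [nrm_def, smul_dot, dot_smul', ← norm3_sq]
  field_simp [(norm3_pos (w_ne himm hx)).ne']

lemma nrm_dot_w' (himm : ∀ x ∈ S, LinearIndependent ℝ ![pdv 0 u x, pdv 1 u x]) (hx : x ∈ S)
    (v : Fin 3 → ℝ) :
    v ⬝ᵥ (pdv 0 u x ⨯₃ pdv 1 u x)
      = norm3 (pdv 0 u x ⨯₃ pdv 1 u x) * (v ⬝ᵥ nrm u x) := by
  rw [nrm_def, dot_smul', ← mul_assoc]
  field_simp [(norm3_pos (w_ne himm hx)).ne']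

lemma detg_eq : Matrix.det (gmat u x)
    = (pdv 0 u x ⨯₃ pdv 1 u x) ⬝ᵥ (pdv 0 u x ⨯₃ pdv 1 u x) := by
  rw [Matrix.det_fin_two]
  show (pdv 0 u x ⬝ᵥ pdv 0 u x) * (pdv 1 u x ⬝ᵥ pdv 1 u x)
      - (pdv 0 u x ⬝ᵥ pdv 1 u x) * (pdv 1 u x ⬝ᵥ pdv 0 u x) = _
  simp only [cross_apply, dotProduct, Fin.sum_univ_three, Matrix.cons_val_zero,
    Matrix.cons_val_one, Matrix.head_cons, Matrix.cons_val_two, Matrix.tail_cons]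
  ring

lemma detg_ne (himm : ∀ x ∈ S, LinearIndependent ℝ ![pdv 0 u x, pdv 1 u x]) (hx : x ∈ S) :
    Matrix.det (gmat u x) ≠ 0 := by
  rw [detg_eq]; exact (dot_self_pos (w_ne himm hx)).ne'

lemma ginv_entry (k l : Fin 2) : ginv u x k l
    = (Matrix.det (gmat u x))⁻¹ *
      (!![gmat u x 1 1, -(gmat u x 0 1); -(gmat u x 1 0), gmat u x 0 0] k l) := by
  unfold ginv
  rw [Matrix.inv_def, Matrix.adjugate_fin_two]
  simp [Ring.inverse_eq_inv']

end Immersion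
section Structure

variable {S : Set (Fin 2 → ℝ)} {x : Fin 2 → ℝ} {u : (Fin 2 → ℝ) → (Fin 3 → ℝ)}

variable (hS : IsOpen S) (hu : ContDiffOn ℝ (⊤ : ℕ∞) u S)
  (himm : ∀ x ∈ S, LinearIndependent ℝ ![pdv 0 u x, pdv 1 u x])

section Smooth
include hS hu

lemma cdo_w : ContDiffOn ℝ (⊤ : ℕ∞) (fun z => pdv 0 u z ⨯₃ pdv 1 u z) S :=
  cdo_cross (cdo_pdv hS hu 0) (cdo_pdv hS hu 1)

include himm

lemma cdo_norm3w : ContDiffOn ℝ (⊤ : ℕ∞) (fun z => norm3 (pdv 0 u z ⨯₃ pdv 1 u z)) S := by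
  unfold norm3
  exact (cdo_dot (cdo_w hS hu) (cdo_w hS hu)).sqrt
    (fun z hz => (dot_self_pos (w_ne himm hz)).ne')

lemma cdo_nrm : ContDiffOn ℝ (⊤ : ℕ∞) (nrm u) S := by
  have := cdo_smul ((cdo_norm3w hS hu himm).inv
    (fun z hz => (norm3_pos (w_ne himm hz)).ne')) (cdo_w hS hu)
  exact this

end Smooth

lemma cdo_gmat (hS : IsOpen S) (hu : ContDiffOn ℝ (⊤ : ℕ∞) u S) (i j : Fin 2) :
    ContDiffOn ℝ (⊤ : ℕ∞) (fun z => gmat u z i j) S :=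
  cdo_dot (cdo_pdv hS hu i) (cdo_pdv hS hu j)

lemma cdo_detg (hS : IsOpen S) (hu : ContDiffOn ℝ (⊤ : ℕ∞) u S) :
    ContDiffOn ℝ (⊤ : ℕ∞) (fun z => Matrix.det (gmat u z)) S := by
  have : ∀ z, Matrix.det (gmat u z)
      = gmat u z 0 0 * gmat u z 1 1 - gmat u z 0 1 * gmat u z 1 0 :=
    fun z => Matrix.det_fin_two _
  exact (((cdo_gmat hS hu 0 0).mul (cdo_gmat hS hu 1 1)).sub
    ((cdo_gmat hS hu 0 1).mul (cdo_gmat hS hu 1 0))).congr (fun z _ => (this z))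

lemma cdo_ginv (hS : IsOpen S) (hu : ContDiffOn ℝ (⊤ : ℕ∞) u S)
    (himm : ∀ x ∈ S, LinearIndependent ℝ ![pdv 0 u x, pdv 1 u x]) (k l : Fin 2) :
    ContDiffOn ℝ (⊤ : ℕ∞) (fun z => ginv u z k l) S := by
  have hinv : ContDiffOn ℝ (⊤ : ℕ∞) (fun z => (Matrix.det (gmat u z))⁻¹) S :=
    (cdo_detg hS hu).inv (fun z hz => detg_ne himm hz)
  have he : ∀ z, ginv u z k l = (Matrix.det (gmat u z))⁻¹ *
      (!![gmat u z 1 1, -(gmat u z 0 1); -(gmat u z 1 0), gmat u z 0 0] k l) :=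
    fun z => ginv_entry k l
  refine ContDiffOn.congr ?_ (fun z _ => he z)
  fin_cases k <;> fin_cases l <;>
    simp only [Matrix.cons_val_zero, Matrix.cons_val_one, Matrix.head_cons,
      Matrix.of_apply, Matrix.cons_val', Matrix.head_fin_const, Matrix.empty_val',
      Matrix.cons_val_fin_one, Fin.zero_eta, Fin.mk_one] <;>
    [exact hinv.mul (cdo_gmat hS hu 1 1);
     exact hinv.mul ((cdo_gmat hS hu 0 1).neg);
     exact hinv.mul ((cdo_gmat hS hu 1 0).neg);
     exact hinv.mul (cdo_gmat hS hu 0 0)]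

lemma pds_gmat (hS : IsOpen S) (hu : ContDiffOn ℝ (⊤ : ℕ∞) u S) (hx : x ∈ S) (m i l : Fin 2) :
    pds m (fun z => gmat u z i l) x
      = pdv m (pdv i u) x ⬝ᵥ pdv l u x + pdv i u x ⬝ᵥ pdv m (pdv l u) x :=
  pds_dot (diffAt hS hx (cdo_pdv hS hu i)) (diffAt hS hx (cdo_pdv hS hu l))

lemma Gam_eq (hS : IsOpen S) (hu : ContDiffOn ℝ (⊤ : ℕ∞) u S) (hx : x ∈ S) (k i j : Fin 2) :
    Gam u x k i j = ∑ l, ginv u x k l * (pdv i (pdv j u) x ⬝ᵥ pdv l u x) := by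
  unfold Gam
  rw [Finset.mul_sum]
  refine Finset.sum_congr rfl fun l _ => ?_
  rw [pds_gmat hS hu hx j i l, pds_gmat hS hu hx i j l, pds_gmat hS hu hx l i j,
    pdv_comm hS hx hu j i, pdv_comm hS hx hu j l, pdv_comm hS hx hu i l,
    dotProduct_comm (pdv i u x) (pdv l (pdv j u) x),
    dotProduct_comm (pdv j u x) (pdv l (pdv i u) x)]
  ring

/-- The Gauss formula for `u`. -/
lemma gauss_formula (hS : IsOpen S) (hu : ContDiffOn ℝ (⊤ : ℕ∞) u S)
    (himm : ∀ x ∈ S, LinearIndependent ℝ ![pdv 0 u x, pdv 1 u x]) (hx : x ∈ S) (i j : Fin 2) :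
    pdv i (pdv j u) x = Gam u x 0 i j • pdv 0 u x + Gam u x 1 i j • pdv 1 u x
      + sff u x i j • nrm u x := by
  have hw := w_ne (u := u) himm hx
  have hdet := detg_ne himm hx
  set a := pdv 0 u x with ha
  set b := pdv 1 u x with hb
  set v := pdv i (pdv j u) x with hv
  set d := Matrix.det (gmat u x) with hd
  have hG00 : gmat u x 0 0 = a ⬝ᵥ a := rfl
  have hG01 : gmat u x 0 1 = a ⬝ᵥ b := rfl
  have hG10 : gmat u x 1 0 = b ⬝ᵥ a := rfl
  have hG11 : gmat u x 1 1 = b ⬝ᵥ b := rfl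
  have hdet2 : d = (a ⬝ᵥ a) * (b ⬝ᵥ b) - (a ⬝ᵥ b) * (b ⬝ᵥ a) := by
    rw [hd, Matrix.det_fin_two, hG00, hG01, hG10, hG11]
  have hGam0 : Gam u x 0 i j = d⁻¹ * ((b ⬝ᵥ b) * (v ⬝ᵥ a) - (a ⬝ᵥ b) * (v ⬝ᵥ b)) := by
    rw [Gam_eq hS hu hx 0 i j, Fin.sum_univ_two, ginv_entry, ginv_entry]
    simp only [Matrix.cons_val_zero, Matrix.cons_val_one, Matrix.head_cons,
      Matrix.of_apply, Matrix.cons_val', Matrix.head_fin_const, Matrix.empty_val',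
      Matrix.cons_val_fin_one, hG01, hG11]
    rw [← ha, ← hb, ← hv, ← hd]
    ring
  have hGam1 : Gam u x 1 i j = d⁻¹ * ((a ⬝ᵥ a) * (v ⬝ᵥ b) - (b ⬝ᵥ a) * (v ⬝ᵥ a)) := by
    rw [Gam_eq hS hu hx 1 i j, Fin.sum_univ_two, ginv_entry, ginv_entry]
    simp only [Matrix.cons_val_zero, Matrix.cons_val_one, Matrix.head_cons,
      Matrix.of_apply, Matrix.cons_val', Matrix.head_fin_const, Matrix.empty_val',
      Matrix.cons_val_fin_one, hG00, hG10]
    rw [← ha, ← hb, ← hv, ← hd]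
    ring
  have hab : a ⬝ᵥ b = b ⬝ᵥ a := dotProduct_comm _ _
  have hsff : sff u x i j = nrm u x ⬝ᵥ v := rfl
  have hba : b ⬝ᵥ a = a ⬝ᵥ b := dotProduct_comm _ _
  have hdet3 : d = (a ⬝ᵥ a) * (b ⬝ᵥ b) - (a ⬝ᵥ b) * (a ⬝ᵥ b) := by rw [hdet2, hba]
  have hinv : d⁻¹ * d = 1 := inv_mul_cancel₀ hdet
  refine (eq_of_dots hw ?_ ?_ ?_).symm
  · rw [add_dotProduct, add_dotProduct, smul_dot, smul_dot, smul_dot,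
      show nrm u x ⬝ᵥ a = 0 from nrm_dot_a, mul_zero, add_zero, hGam0, hGam1, hba]
    linear_combination (v ⬝ᵥ a) * hinv - d⁻¹ * (v ⬝ᵥ a) * hdet3
  · rw [add_dotProduct, add_dotProduct, smul_dot, smul_dot, smul_dot,
      show nrm u x ⬝ᵥ b = 0 from nrm_dot_b, mul_zero, add_zero, hGam0, hGam1, hba]
    linear_combination (v ⬝ᵥ b) * hinv - d⁻¹ * (v ⬝ᵥ b) * hdet3
  · rw [add_dotProduct, add_dotProduct, smul_dot, smul_dot, smul_dot,
      show a ⬝ᵥ (a ⨯₃ b) = 0 from by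
        rw [dotProduct_comm]; exact cross_dot_left a b,
      show b ⬝ᵥ (a ⨯₃ b) = 0 from by
        rw [dotProduct_comm]; exact cross_dot_right a b,
      mul_zero, mul_zero, zero_add, zero_add,
      show nrm u x ⬝ᵥ (a ⨯₃ b) = norm3 (a ⨯₃ b) from nrm_dot_w himm hx,
      show v ⬝ᵥ (a ⨯₃ b) = norm3 (a ⨯₃ b) * (v ⬝ᵥ nrm u x) from nrm_dot_w' himm hx v,
      hsff, dotProduct_comm v (nrm u x)]
    ring

end Structure
section YField

/-- auxiliary triple-product algebra -/
lemma cross_dot_shift (p a b : Fin 3 → ℝ) : (p ⨯₃ a) ⬝ᵥ b = p ⬝ᵥ (a ⨯₃ b) := by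
  simp only [cross_apply, dotProduct, Fin.sum_univ_three, Matrix.cons_val_zero,
    Matrix.cons_val_one, Matrix.head_cons, Matrix.cons_val_two, Matrix.tail_cons]
  ring

lemma dot_cross_self' (v p : Fin 3 → ℝ) : v ⬝ᵥ (p ⨯₃ v) = 0 := by
  simp only [cross_apply, dotProduct, Fin.sum_univ_three, Matrix.cons_val_zero,
    Matrix.cons_val_one, Matrix.head_cons, Matrix.cons_val_two, Matrix.tail_cons]
  ring

/-- The rotation field of an infinitesimal bending. -/
def yb (u τ : (Fin 2 → ℝ) → (Fin 3 → ℝ)) (z : Fin 2 → ℝ) : Fin 3 → ℝ :=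
  ((pdv 0 u z ⨯₃ pdv 1 u z) ⬝ᵥ (pdv 0 u z ⨯₃ pdv 1 u z))⁻¹ •
    ( ((pdv 0 u z ⨯₃ pdv 1 u z) ⬝ᵥ pdv 1 τ z) • pdv 0 u z
      - ((pdv 0 u z ⨯₃ pdv 1 u z) ⬝ᵥ pdv 0 τ z) • pdv 1 u z
      + (pdv 1 u z ⬝ᵥ pdv 0 τ z) • (pdv 0 u z ⨯₃ pdv 1 u z) )

section ycross
variable (a b p q : Fin 3 → ℝ)

local notation "W" => a ⨯₃ b
local notation "Y" => (W ⬝ᵥ q) • a - (W ⬝ᵥ p) • b + (b ⬝ᵥ p) • W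

lemma ycross_a_dot_a : (Y ⨯₃ a) ⬝ᵥ a = 0 := by
  simp only [cross_apply, dotProduct, Fin.sum_univ_three, Matrix.cons_val_zero,
    Matrix.cons_val_one, Matrix.head_cons, Matrix.cons_val_two, Matrix.tail_cons,
    Pi.add_apply, Pi.sub_apply, Pi.smul_apply, smul_eq_mul]
  ring

lemma ycross_a_dot_b : (Y ⨯₃ a) ⬝ᵥ b = (W ⬝ᵥ W) * (p ⬝ᵥ b) := by
  simp only [cross_apply, dotProduct, Fin.sum_univ_three, Matrix.cons_val_zero,
    Matrix.cons_val_one, Matrix.head_cons, Matrix.cons_val_two, Matrix.tail_cons,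
    Pi.add_apply, Pi.sub_apply, Pi.smul_apply, smul_eq_mul]
  ring

lemma ycross_a_dot_w : (Y ⨯₃ a) ⬝ᵥ W = (W ⬝ᵥ W) * (p ⬝ᵥ W) := by
  simp only [cross_apply, dotProduct, Fin.sum_univ_three, Matrix.cons_val_zero,
    Matrix.cons_val_one, Matrix.head_cons, Matrix.cons_val_two, Matrix.tail_cons,
    Pi.add_apply, Pi.sub_apply, Pi.smul_apply, smul_eq_mul]
  ring

lemma ycross_b_dot_a : (Y ⨯₃ b) ⬝ᵥ a = -((W ⬝ᵥ W) * (b ⬝ᵥ p)) := by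
  simp only [cross_apply, dotProduct, Fin.sum_univ_three, Matrix.cons_val_zero,
    Matrix.cons_val_one, Matrix.head_cons, Matrix.cons_val_two, Matrix.tail_cons,
    Pi.add_apply, Pi.sub_apply, Pi.smul_apply, smul_eq_mul]
  ring

lemma ycross_b_dot_b : (Y ⨯₃ b) ⬝ᵥ b = 0 := by
  simp only [cross_apply, dotProduct, Fin.sum_univ_three, Matrix.cons_val_zero,
    Matrix.cons_val_one, Matrix.head_cons, Matrix.cons_val_two, Matrix.tail_cons,
    Pi.add_apply, Pi.sub_apply, Pi.smul_apply, smul_eq_mul]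
  ring

lemma ycross_b_dot_w : (Y ⨯₃ b) ⬝ᵥ W = (W ⬝ᵥ W) * (q ⬝ᵥ W) := by
  simp only [cross_apply, dotProduct, Fin.sum_univ_three, Matrix.cons_val_zero,
    Matrix.cons_val_one, Matrix.head_cons, Matrix.cons_val_two, Matrix.tail_cons,
    Pi.add_apply, Pi.sub_apply, Pi.smul_apply, smul_eq_mul]
  ring

end ycross

variable {S : Set (Fin 2 → ℝ)} {u τ : (Fin 2 → ℝ) → (Fin 3 → ℝ)}

lemma cdo_yb (hS : IsOpen S) (hu : ContDiffOn ℝ (⊤ : ℕ∞) u S)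
    (himm : ∀ x ∈ S, LinearIndependent ℝ ![pdv 0 u x, pdv 1 u x])
    (hτ : ContDiffOn ℝ (⊤ : ℕ∞) τ S) : ContDiffOn ℝ (⊤ : ℕ∞) (yb u τ) S := by
  have hw := cdo_w hS hu
  have h1 : ContDiffOn ℝ (⊤ : ℕ∞)
      (fun z => ((pdv 0 u z ⨯₃ pdv 1 u z) ⬝ᵥ (pdv 0 u z ⨯₃ pdv 1 u z))⁻¹) S :=
    (cdo_dot hw hw).inv (fun z hz => (dot_self_pos (w_ne himm hz)).ne')
  exact cdo_smul h1
   (((cdo_smul (cdo_dot hw (cdo_pdv hS hτ 1)) (cdo_pdv hS hu 0)).sub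
      (cdo_smul (cdo_dot hw (cdo_pdv hS hτ 0)) (cdo_pdv hS hu 1))).add
      (cdo_smul (cdo_dot (cdo_pdv hS hu 1) (cdo_pdv hS hτ 0)) hw))

/-- `τ` differentiates as the action of the rotation field. -/
lemma hy_rot (himm : ∀ x ∈ S, LinearIndependent ℝ ![pdv 0 u x, pdv 1 u x])
    (hbend : ∀ x ∈ S, ∀ i j : Fin 2,
      pdv i u x ⬝ᵥ pdv j τ x + pdv j u x ⬝ᵥ pdv i τ x = 0)
    {z : Fin 2 → ℝ} (hz : z ∈ S) (i : Fin 2) :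
    pdv i τ z = yb u τ z ⨯₃ pdv i u z := by
  set a := pdv 0 u z with ha
  set b := pdv 1 u z with hb
  set p := pdv 0 τ z with hp
  set q := pdv 1 τ z with hq
  have hw : a ⨯₃ b ≠ 0 := w_ne himm hz
  have hww : (a ⨯₃ b) ⬝ᵥ (a ⨯₃ b) ≠ 0 := (dot_self_pos hw).ne'
  have hpp : a ⬝ᵥ p = 0 := by have := hbend z hz 0 0; rw [← ha, ← hp] at this; linarith
  have hqq : b ⬝ᵥ q = 0 := by have := hbend z hz 1 1; rw [← hb, ← hq] at this; linarith
  have hpq : a ⬝ᵥ q + b ⬝ᵥ p = 0 := by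
    have := hbend z hz 0 1; rw [← ha, ← hb, ← hp, ← hq] at this; linarith
  have hyb : yb u τ z = ((a ⨯₃ b) ⬝ᵥ (a ⨯₃ b))⁻¹ •
      (((a ⨯₃ b) ⬝ᵥ q) • a - ((a ⨯₃ b) ⬝ᵥ p) • b + (b ⬝ᵥ p) • (a ⨯₃ b)) := rfl
  have hcs : ∀ (c : ℝ) (Y v : Fin 3 → ℝ), (c • Y) ⨯₃ v = c • (Y ⨯₃ v) := by
    intro c Y v
    rw [_root_.map_smul]
    rfl
  fin_cases i
  · show p = yb u τ z ⨯₃ a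
    refine (eq_of_dots hw ?_ ?_ ?_).symm
    · rw [hyb, hcs, smul_dot, ycross_a_dot_a, mul_zero,
        dotProduct_comm p a, hpp]
    · rw [hyb, hcs, smul_dot, ycross_a_dot_b, ← mul_assoc,
        inv_mul_cancel₀ hww, one_mul]
    · rw [hyb, hcs, smul_dot, ycross_a_dot_w, ← mul_assoc,
        inv_mul_cancel₀ hww, one_mul]
  · show q = yb u τ z ⨯₃ b
    refine (eq_of_dots hw ?_ ?_ ?_).symm
    · rw [hyb, hcs, smul_dot, ycross_b_dot_a, mul_neg, ← mul_assoc,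
        inv_mul_cancel₀ hww, one_mul, dotProduct_comm q a]
      linarith
    · rw [hyb, hcs, smul_dot, ycross_b_dot_b, mul_zero, dotProduct_comm q b, hqq]
    · rw [hyb, hcs, smul_dot, ycross_b_dot_w, ← mul_assoc,
        inv_mul_cancel₀ hww, one_mul]

end YField
section Tangency

variable {S : Set (Fin 2 → ℝ)} {u τ : (Fin 2 → ℝ) → (Fin 3 → ℝ)} {z : Fin 2 → ℝ}

lemma cross_swap_eq (hS : IsOpen S) (hu : ContDiffOn ℝ (⊤ : ℕ∞) u S)
    (himm : ∀ x ∈ S, LinearIndependent ℝ ![pdv 0 u x, pdv 1 u x])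
    (hτ : ContDiffOn ℝ (⊤ : ℕ∞) τ S)
    (hbend : ∀ x ∈ S, ∀ i j : Fin 2,
      pdv i u x ⬝ᵥ pdv j τ x + pdv j u x ⬝ᵥ pdv i τ x = 0)
    (hz : z ∈ S) :
    pdv 0 (yb u τ) z ⨯₃ pdv 1 u z = pdv 1 (yb u τ) z ⨯₃ pdv 0 u z := by
  have hydiff := diffAt hS hz (cdo_yb hS hu himm hτ)
  have e1 : pdv 0 (pdv 1 τ) z
      = pdv 0 (yb u τ) z ⨯₃ pdv 1 u z + yb u τ z ⨯₃ pdv 0 (pdv 1 u) z := by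
    rw [show pdv 0 (pdv 1 τ) z = pdv 0 (fun ζ => yb u τ ζ ⨯₃ pdv 1 u ζ) z from
      pdv_congr (evEq_of_eqOn hS hz (fun ζ hζ => hy_rot himm hbend hζ 1))]
    exact pdv_cross hydiff (diffAt hS hz (cdo_pdv hS hu 1))
  have e2 : pdv 1 (pdv 0 τ) z
      = pdv 1 (yb u τ) z ⨯₃ pdv 0 u z + yb u τ z ⨯₃ pdv 1 (pdv 0 u) z := by
    rw [show pdv 1 (pdv 0 τ) z = pdv 1 (fun ζ => yb u τ ζ ⨯₃ pdv 0 u ζ) z from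
      pdv_congr (evEq_of_eqOn hS hz (fun ζ hζ => hy_rot himm hbend hζ 0))]
    exact pdv_cross hydiff (diffAt hS hz (cdo_pdv hS hu 0))
  have e3 := pdv_comm hS hz hτ 0 1
  rw [e1, e2, pdv_comm hS hz hu 0 1] at e3
  exact add_right_cancel e3

lemma hty (hS : IsOpen S) (hu : ContDiffOn ℝ (⊤ : ℕ∞) u S)
    (himm : ∀ x ∈ S, LinearIndependent ℝ ![pdv 0 u x, pdv 1 u x])
    (hτ : ContDiffOn ℝ (⊤ : ℕ∞) τ S)
    (hbend : ∀ x ∈ S, ∀ i j : Fin 2,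
      pdv i u x ⬝ᵥ pdv j τ x + pdv j u x ⬝ᵥ pdv i τ x = 0)
    (hz : z ∈ S) (i : Fin 2) :
    pdv i (yb u τ) z ⬝ᵥ (pdv 0 u z ⨯₃ pdv 1 u z) = 0 := by
  have hswap := cross_swap_eq hS hu himm hτ hbend hz
  set a := pdv 0 u z
  set b := pdv 1 u z
  set P0 := pdv 0 (yb u τ) z
  set P1 := pdv 1 (yb u τ) z
  fin_cases i
  · have h1 : (P1 ⨯₃ a) ⬝ᵥ a = 0 := by
      rw [cross_dot_shift, cross_self, dotProduct_zero]
    have h2 : (P0 ⨯₃ b) ⬝ᵥ a = 0 := by rw [hswap]; exact h1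
    rw [cross_dot_shift] at h2
    have hba : b ⨯₃ a = -(a ⨯₃ b) := by rw [cross_anticomm]
    rw [hba, dotProduct_neg] at h2
    show P0 ⬝ᵥ (a ⨯₃ b) = 0
    linarith
  · have h1 : (P0 ⨯₃ b) ⬝ᵥ b = 0 := by
      rw [cross_dot_shift, cross_self, dotProduct_zero]
    have h2 : (P1 ⨯₃ a) ⬝ᵥ b = 0 := by rw [← hswap]; exact h1
    rw [cross_dot_shift] at h2
    exact h2

/-- Decomposition of a tangent vector in the frame `∂₁u, ∂₂u` with inverse-metric
coefficients. -/
lemma tangent_decomp {x : Fin 2 → ℝ}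
    (himm : ∀ x ∈ S, LinearIndependent ℝ ![pdv 0 u x, pdv 1 u x]) (hx : x ∈ S)
    (v : Fin 3 → ℝ) (hvw : v ⬝ᵥ (pdv 0 u x ⨯₃ pdv 1 u x) = 0) :
    v = (∑ l, ginv u x 0 l * (v ⬝ᵥ pdv l u x)) • pdv 0 u x
      + (∑ l, ginv u x 1 l * (v ⬝ᵥ pdv l u x)) • pdv 1 u x := by
  have hw := w_ne (u := u) himm hx
  have hdet := detg_ne himm hx
  set a := pdv 0 u x with ha
  set b := pdv 1 u x with hb
  set d := Matrix.det (gmat u x) with hd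
  have hG00 : gmat u x 0 0 = a ⬝ᵥ a := rfl
  have hG01 : gmat u x 0 1 = a ⬝ᵥ b := rfl
  have hG10 : gmat u x 1 0 = b ⬝ᵥ a := rfl
  have hG11 : gmat u x 1 1 = b ⬝ᵥ b := rfl
  have hba : b ⬝ᵥ a = a ⬝ᵥ b := dotProduct_comm _ _
  have hdet3 : d = (a ⬝ᵥ a) * (b ⬝ᵥ b) - (a ⬝ᵥ b) * (a ⬝ᵥ b) := by
    rw [hd, Matrix.det_fin_two, hG00, hG01, hG10, hG11, hba]
  have hinv : d⁻¹ * d = 1 := inv_mul_cancel₀ hdet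
  have hc0 : (∑ l, ginv u x 0 l * (v ⬝ᵥ pdv l u x))
      = d⁻¹ * ((b ⬝ᵥ b) * (v ⬝ᵥ a) - (a ⬝ᵥ b) * (v ⬝ᵥ b)) := by
    rw [Fin.sum_univ_two, ginv_entry, ginv_entry]
    simp only [Matrix.cons_val_zero, Matrix.cons_val_one, Matrix.head_cons,
      Matrix.of_apply, Matrix.cons_val', Matrix.head_fin_const, Matrix.empty_val',
      Matrix.cons_val_fin_one, hG01, hG11]
    rw [← ha, ← hb, ← hd]
    ring
  have hc1 : (∑ l, ginv u x 1 l * (v ⬝ᵥ pdv l u x))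
      = d⁻¹ * ((a ⬝ᵥ a) * (v ⬝ᵥ b) - (b ⬝ᵥ a) * (v ⬝ᵥ a)) := by
    rw [Fin.sum_univ_two, ginv_entry, ginv_entry]
    simp only [Matrix.cons_val_zero, Matrix.cons_val_one, Matrix.head_cons,
      Matrix.of_apply, Matrix.cons_val', Matrix.head_fin_const, Matrix.empty_val',
      Matrix.cons_val_fin_one, hG00, hG10]
    rw [← ha, ← hb, ← hd]
    ring
  refine (eq_of_dots hw ?_ ?_ ?_).symm
  · rw [add_dotProduct, smul_dot, smul_dot, hc0, hc1, hba]
    linear_combination (v ⬝ᵥ a) * hinv - d⁻¹ * (v ⬝ᵥ a) * hdet3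
  · rw [add_dotProduct, smul_dot, smul_dot, hc0, hc1, hba]
    linear_combination (v ⬝ᵥ b) * hinv - d⁻¹ * (v ⬝ᵥ b) * hdet3
  · rw [add_dotProduct, smul_dot, smul_dot,
      show a ⬝ᵥ (a ⨯₃ b) = 0 from by
        rw [dotProduct_comm]; exact cross_dot_left a b,
      show b ⬝ᵥ (a ⨯₃ b) = 0 from by
        rw [dotProduct_comm]; exact cross_dot_right a b,
      hvw]
    ring

lemma Gam_symm (k i j : Fin 2) : Gam u z k i j = Gam u z k j i := by
  unfold Gam
  have hg : (fun ζ => gmat u ζ i j) = (fun ζ => gmat u ζ j i) :=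
    funext fun ζ => by
      show pdv i u ζ ⬝ᵥ pdv j u ζ = pdv j u ζ ⬝ᵥ pdv i u ζ
      exact dotProduct_comm _ _
  rw [hg]
  congr 1
  exact Finset.sum_congr rfl fun l _ => by ring

end Tangency
section BRep

lemma cross_left_linear (c0 c1 : ℝ) (a b v : Fin 3 → ℝ) :
    (c0 • a + c1 • b) ⨯₃ v = c0 • (a ⨯₃ v) + c1 • (b ⨯₃ v) := by
  funext k
  fin_cases k <;>
    simp only [cross_apply, Fin.zero_eta, Fin.mk_one,
      show (⟨2, by norm_num⟩ : Fin 3) = 2 from rfl, Matrix.cons_val_zero,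
      Matrix.cons_val_one, Matrix.head_cons, Matrix.cons_val_two, Matrix.tail_cons,
      Pi.add_apply, Pi.smul_apply, smul_eq_mul] <;> ring

variable {S : Set (Fin 2 → ℝ)} {u τ : (Fin 2 → ℝ) → (Fin 3 → ℝ)} {z : Fin 2 → ℝ}

lemma b_rep (hS : IsOpen S) (hu : ContDiffOn ℝ (⊤ : ℕ∞) u S)
    (himm : ∀ x ∈ S, LinearIndependent ℝ ![pdv 0 u x, pdv 1 u x])
    (hτ : ContDiffOn ℝ (⊤ : ℕ∞) τ S)
    (hbend : ∀ x ∈ S, ∀ i j : Fin 2,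
      pdv i u x ⬝ᵥ pdv j τ x + pdv j u x ⬝ᵥ pdv i τ x = 0)
    (b : Fin 2 → Fin 2 → (Fin 2 → ℝ) → ℝ)
    (hb : ∀ i j, ∀ x, b i j x
      = nrm u x ⬝ᵥ (pdv i (pdv j τ) x - ∑ k, Gam u x k i j • pdv k τ x))
    (hz : z ∈ S) (i j : Fin 2) :
    b i j z = nrm u z ⬝ᵥ (pdv i (yb u τ) z ⨯₃ pdv j u z) := by
  rw [hb i j z]
  have hydiff := diffAt hS hz (cdo_yb hS hu himm hτ)
  have h2τ : pdv i (pdv j τ) z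
      = pdv i (yb u τ) z ⨯₃ pdv j u z + yb u τ z ⨯₃ pdv i (pdv j u) z := by
    rw [show pdv i (pdv j τ) z = pdv i (fun ζ => yb u τ ζ ⨯₃ pdv j u ζ) z from
      pdv_congr (evEq_of_eqOn hS hz (fun ζ hζ => hy_rot himm hbend hζ j))]
    exact pdv_cross hydiff (diffAt hS hz (cdo_pdv hS hu j))
  have hsum : (∑ k, Gam u z k i j • pdv k τ z)
      = Gam u z 0 i j • (yb u τ z ⨯₃ pdv 0 u z)
        + Gam u z 1 i j • (yb u τ z ⨯₃ pdv 1 u z) := by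
    rw [Fin.sum_univ_two, hy_rot himm hbend hz 0, hy_rot himm hbend hz 1]
  have hcross2 : yb u τ z ⨯₃ pdv i (pdv j u) z
      = Gam u z 0 i j • (yb u τ z ⨯₃ pdv 0 u z) + Gam u z 1 i j • (yb u τ z ⨯₃ pdv 1 u z)
        + sff u z i j • (yb u τ z ⨯₃ nrm u z) := by
    rw [gauss_formula hS hu himm hz i j, map_add, map_add, _root_.map_smul,
      _root_.map_smul, _root_.map_smul]
  rw [h2τ, hsum, hcross2]
  have habel : ∀ (P B0 B1 Cn : Fin 3 → ℝ), P + (B0 + B1 + Cn) - (B0 + B1) = P + Cn := by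
    intros; abel
  rw [habel, dotProduct_add, dot_smul', dot_cross_self', mul_zero, add_zero]

end BRep
/-- Let `u` be a smooth immersion on an open `S ⊆ ℝ²`, `τ` a smooth
infinitesimal bending of `u` and `b_{ij} = n·(∂ᵢ∂ⱼτ − Γ^k_{ij}∂_kτ)` its linearised second
fundamental form. Then `b` satisfies the linearised Gauss–Codazzi–Mainardi system on `S`. -/
theorem linearised_gauss_codazzi_mainardi
    (S : Set (Fin 2 → ℝ)) (hS : IsOpen S)
    (u : (Fin 2 → ℝ) → (Fin 3 → ℝ)) (hu : ContDiffOn ℝ (⊤ : ℕ∞) u S)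
    (himm : ∀ x ∈ S, LinearIndependent ℝ ![pdv 0 u x, pdv 1 u x])
    (τ : (Fin 2 → ℝ) → (Fin 3 → ℝ)) (hτ : ContDiffOn ℝ (⊤ : ℕ∞) τ S)
    (hbend : ∀ x ∈ S, ∀ i j : Fin 2,
      pdv i u x ⬝ᵥ pdv j τ x + pdv j u x ⬝ᵥ pdv i τ x = 0)
    (b : Fin 2 → Fin 2 → (Fin 2 → ℝ) → ℝ)
    (hb : ∀ i j, ∀ x, b i j x
      = nrm u x ⬝ᵥ (pdv i (pdv j τ) x - ∑ k, Gam u x k i j • pdv k τ x)) :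
    ∀ x ∈ S,
      (b 0 0 x * sff u x 1 1 + sff u x 0 0 * b 1 1 x - 2 * sff u x 0 1 * b 0 1 x = 0) ∧
      (pds 1 (b 0 0) x - pds 0 (b 0 1) x - (∑ k, Gam u x k 0 1 * b k 0 x)
        + (∑ k, Gam u x k 0 0 * b k 1 x) = 0) ∧
      (pds 1 (b 0 1) x - pds 0 (b 1 1) x - (∑ k, Gam u x k 1 1 * b k 0 x)
        + (∑ k, Gam u x k 0 1 * b k 1 x) = 0) := by
  intro x hx
  have hYcdo := cdo_yb hS hu himm hτ
  have hbrep : ∀ z ∈ S, ∀ i j : Fin 2,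
      b i j z = nrm u z ⬝ᵥ (pdv i (yb u τ) z ⨯₃ pdv j u z) :=
    fun z hz i j => b_rep hS hu himm hτ hbend b hb hz i j
  have bsym : ∀ z ∈ S, b 0 1 z = b 1 0 z := by
    intro z hz
    rw [hb 0 1 z, hb 1 0 z, pdv_comm hS hz hτ 0 1]
    have hGs : ∀ k : Fin 2, Gam u z k 0 1 = Gam u z k 1 0 := fun k => Gam_symm k 0 1
    simp_rw [hGs]
  set cf : Fin 2 → Fin 2 → (Fin 2 → ℝ) → ℝ :=
    fun k i z => ∑ l, ginv u z k l * (pdv i (yb u τ) z ⬝ᵥ pdv l u z) with hcf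
  have cdo_cf : ∀ k i : Fin 2, ContDiffOn ℝ (⊤ : ℕ∞) (cf k i) S := by
    intro k i
    exact (((cdo_ginv hS hu himm k 0).mul
        (cdo_dot (cdo_pdv hS hYcdo i) (cdo_pdv hS hu 0))).add
      ((cdo_ginv hS hu himm k 1).mul
        (cdo_dot (cdo_pdv hS hYcdo i) (cdo_pdv hS hu 1)))).congr
      (fun z _ => by simp [hcf, Fin.sum_univ_two])
  have hdecomp : ∀ z ∈ S, ∀ i : Fin 2,
      pdv i (yb u τ) z = cf 0 i z • pdv 0 u z + cf 1 i z • pdv 1 u z :=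
    fun z hz i => tangent_decomp himm hz _ (hty hS hu himm hτ hbend hz i)
  have dcf : ∀ k i : Fin 2, DifferentiableAt ℝ (cf k i) x :=
    fun k i => diffAt hS hx (cdo_cf k i)
  have du : ∀ k : Fin 2, DifferentiableAt ℝ (pdv k u) x :=
    fun k => diffAt hS hx (cdo_pdv hS hu k)
  have dY : ∀ i : Fin 2, DifferentiableAt ℝ (pdv i (yb u τ)) x :=
    fun i => diffAt hS hx (cdo_pdv hS hYcdo i)
  have dn : DifferentiableAt ℝ (nrm u) x := diffAt hS hx (cdo_nrm hS hu himm)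
  set s := norm3 (pdv 0 u x ⨯₃ pdv 1 u x) with hs
  have h1 : ∀ i j : Fin 2, nrm u x ⬝ᵥ pdv j (pdv i (yb u τ)) x
      = cf 0 i x * sff u x j 0 + cf 1 i x * sff u x j 1 := by
    intro i j
    rw [show pdv j (pdv i (yb u τ)) x
        = pdv j (fun z => cf 0 i z • pdv 0 u z + cf 1 i z • pdv 1 u z) x from
      pdv_congr (evEq_of_eqOn hS hx (fun z hz => hdecomp z hz i))]
    rw [pdv_add (diffAt_smul (dcf 0 i) (du 0)) (diffAt_smul (dcf 1 i) (du 1)),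
      pdv_smul (dcf 0 i) (du 0), pdv_smul (dcf 1 i) (du 1)]
    rw [dotProduct_add, dotProduct_add, dotProduct_add,
      dot_smul', dot_smul', dot_smul', dot_smul', nrm_dot_a, nrm_dot_b]
    show _ = cf 0 i x * (nrm u x ⬝ᵥ pdv j (pdv 0 u) x)
      + cf 1 i x * (nrm u x ⬝ᵥ pdv j (pdv 1 u) x)
    ring
  have eqA : cf 0 0 x * sff u x 1 0 + cf 1 0 x * sff u x 1 1
      = cf 0 1 x * sff u x 0 0 + cf 1 1 x * sff u x 0 1 :=
    calc cf 0 0 x * sff u x 1 0 + cf 1 0 x * sff u x 1 1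
        = nrm u x ⬝ᵥ pdv 1 (pdv 0 (yb u τ)) x := (h1 0 1).symm
      _ = nrm u x ⬝ᵥ pdv 0 (pdv 1 (yb u τ)) x := by rw [pdv_comm hS hx hYcdo 1 0]
      _ = cf 0 1 x * sff u x 0 0 + cf 1 1 x * sff u x 0 1 := h1 1 0
  have hwdot : nrm u x ⬝ᵥ (pdv 0 u x ⨯₃ pdv 1 u x) = s := nrm_dot_w himm hx
  have hwdot' : nrm u x ⬝ᵥ (pdv 1 u x ⨯₃ pdv 0 u x) = -s := by
    rw [← cross_anticomm, dotProduct_neg, hwdot]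
  have brel : ∀ i j : Fin 2, b i j x = nrm u x ⬝ᵥ (pdv i (yb u τ) x ⨯₃ pdv j u x) :=
    hbrep x hx
  have brel0 : ∀ i : Fin 2, b i 0 x = -(s * cf 1 i x) := by
    intro i
    rw [brel i 0, hdecomp x hx i, cross_left_linear, dotProduct_add,
      dot_smul', dot_smul', cross_self, dotProduct_zero, hwdot']
    ring
  have brel1 : ∀ i : Fin 2, b i 1 x = s * cf 0 i x := by
    intro i
    rw [brel i 1, hdecomp x hx i, cross_left_linear, dotProduct_add,
      dot_smul', dot_smul', cross_self, dotProduct_zero, hwdot]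
    ring
  have hsffsym : sff u x 1 0 = sff u x 0 1 := by
    unfold sff; rw [pdv_comm hS hx hu 1 0]
  have hb01 : b 0 1 x = -(s * cf 1 1 x) := by rw [bsym x hx]; exact brel0 1
  have hwne := w_ne (u := u) himm hx
  have hν : ∀ m : Fin 2, pdv m (nrm u) x ⬝ᵥ (pdv 0 u x ⨯₃ pdv 1 u x) = 0 := by
    intro m
    have hone : pds m (fun z => nrm u z ⬝ᵥ nrm u z) x = 0 := by
      rw [pds_congr (evEq_of_eqOn hS hx (fun z hz => nrm_dot_nrm himm hz))]
      exact pds_const 1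
    rw [pds_dot dn dn] at hone
    have hdd : pdv m (nrm u) x ⬝ᵥ nrm u x = 0 := by
      rw [dotProduct_comm (nrm u x) (pdv m (nrm u) x)] at hone; linarith
    rw [nrm_dot_w' himm hx (pdv m (nrm u) x), hdd, mul_zero]
  have hudot : ∀ j : Fin 2, pdv j u x ⬝ᵥ (pdv 0 u x ⨯₃ pdv 1 u x) = 0 := by
    intro j; fin_cases j
    · rw [dotProduct_comm]; exact cross_dot_left _ _
    · rw [dotProduct_comm]; exact cross_dot_right _ _
  have hYdot : ∀ i : Fin 2, pdv i (yb u τ) x ⬝ᵥ (pdv 0 u x ⨯₃ pdv 1 u x) = 0 :=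
    fun i => hty hS hu himm hτ hbend hx i
  have hpdsF : ∀ m i j : Fin 2,
      pds m (fun z => nrm u z ⬝ᵥ (pdv i (yb u τ) z ⨯₃ pdv j u z)) x
        = nrm u x ⬝ᵥ (pdv m (pdv i (yb u τ)) x ⨯₃ pdv j u x)
          + nrm u x ⬝ᵥ (pdv i (yb u τ) x ⨯₃ pdv m (pdv j u) x) := by
    intro m i j
    rw [pds_dot (f := nrm u) (g := fun z => pdv i (yb u τ) z ⨯₃ pdv j u z) dn
        (diffAt_cross (dY i) (du j)),
      pdv_cross (dY i) (du j), triple_perp hwne (hν m) (hYdot i) (hudot j), zero_add,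
      dotProduct_add]
  have hGexp : ∀ i m j : Fin 2, nrm u x ⬝ᵥ (pdv i (yb u τ) x ⨯₃ pdv m (pdv j u) x)
      = Gam u x 0 m j * b i 0 x + Gam u x 1 m j * b i 1 x := by
    intro i m j
    rw [gauss_formula hS hu himm hx m j, map_add, map_add, _root_.map_smul,
      _root_.map_smul, _root_.map_smul, dotProduct_add, dotProduct_add,
      dot_smul', dot_smul', dot_smul', dot_cross_self', mul_zero, add_zero,
      ← brel i 0, ← brel i 1]
  have pb00 : pds 1 (b 0 0) x = nrm u x ⬝ᵥ (pdv 1 (pdv 0 (yb u τ)) x ⨯₃ pdv 0 u x)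
      + (Gam u x 0 1 0 * b 0 0 x + Gam u x 1 1 0 * b 0 1 x) := by
    rw [pds_congr (evEq_of_eqOn hS hx (fun z hz => hbrep z hz 0 0)), hpdsF 1 0 0,
      hGexp 0 1 0]
  have pb01a : pds 0 (b 0 1) x = nrm u x ⬝ᵥ (pdv 0 (pdv 1 (yb u τ)) x ⨯₃ pdv 0 u x)
      + (Gam u x 0 0 0 * b 1 0 x + Gam u x 1 0 0 * b 1 1 x) := by
    have hrep' : ∀ z ∈ S, b 0 1 z = nrm u z ⬝ᵥ (pdv 1 (yb u τ) z ⨯₃ pdv 0 u z) :=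
      fun z hz => by rw [bsym z hz]; exact hbrep z hz 1 0
    rw [pds_congr (evEq_of_eqOn hS hx hrep'), hpdsF 0 1 0, hGexp 1 0 0]
  have pb01b : pds 1 (b 0 1) x = nrm u x ⬝ᵥ (pdv 1 (pdv 0 (yb u τ)) x ⨯₃ pdv 1 u x)
      + (Gam u x 0 1 1 * b 0 0 x + Gam u x 1 1 1 * b 0 1 x) := by
    rw [pds_congr (evEq_of_eqOn hS hx (fun z hz => hbrep z hz 0 1)), hpdsF 1 0 1,
      hGexp 0 1 1]
  have pb11 : pds 0 (b 1 1) x = nrm u x ⬝ᵥ (pdv 0 (pdv 1 (yb u τ)) x ⨯₃ pdv 1 u x)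
      + (Gam u x 0 0 1 * b 1 0 x + Gam u x 1 0 1 * b 1 1 x) := by
    rw [pds_congr (evEq_of_eqOn hS hx (fun z hz => hbrep z hz 1 1)), hpdsF 0 1 1,
      hGexp 1 0 1]
  have hYcomm : pdv 1 (pdv 0 (yb u τ)) x = pdv 0 (pdv 1 (yb u τ)) x :=
    pdv_comm hS hx hYcdo 1 0
  refine ⟨?_, ?_, ?_⟩
  · linear_combination (sff u x 1 1) * (brel0 0) + (sff u x 0 0) * (brel1 1)
      - (sff u x 0 1) * (brel1 0) - (sff u x 0 1) * hb01 - s * eqA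
      + s * (cf 0 0 x) * hsffsym
  · rw [Fin.sum_univ_two, Fin.sum_univ_two, pb00, pb01a, hYcomm]
    linear_combination (b 0 0 x) * (Gam_symm (u := u) (z := x) 0 1 0)
      + (b 1 0 x) * (Gam_symm (u := u) (z := x) 1 1 0)
      + (Gam u x 1 1 0 + Gam u x 0 0 0) * (bsym x hx)
  · rw [Fin.sum_univ_two, Fin.sum_univ_two, pb01b, pb11, hYcomm]
    linear_combination (Gam u x 1 1 1 + Gam u x 0 0 1) * (bsym x hx)
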